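/- Let x₁, x₂ > 0, λ > 0, and b̃₁₂, b̃₁₃, b̃₂₃, b̃₁₂₃ ≥ 0. The Laplace transform in x₃ of the measure [Γ(λ)]^{-1} x₃^{λ-1} F_{II}(λ, λ, b̃₁₃x₁x₃·b̃₂₃x₂x₃, b̃₁₂₃x₁x₂x₃, b̃₁₂x₁x₂, b̃₁₃x₁x₃ + b̃₂₃x₂x₃) 𝟙_{(0,∞)}(x₃) dx₃ at θ₃ > 0 (sufficiently large) equals θ₃^{-λ} exp((b̃₁₃x₁ + b̃₂₃x₂)/θ₃) · ₀F₁(;λ; (b̃₁₃b̃₂₃/θ₃² + b̃₁₂₃/θ₃ + b̃₁₂)x₁x₂), where F_{II}(λ₁,λ₂,z₁,z₂,z₃,z₄) = Σ_{m₁,…,m₄≥0} z₁^{m₁}z₂^{m₂}z₃^{m₃}z₄^{m₄} / ((λ₁)_{m₁+m₂+m₃}(λ₂)_{2m₁+m₂+m₄} m₁!m₂!m₃!m₄!). -/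

import Mathlib

open MeasureTheory Real Set

noncomputable def poch (a : ℝ) (n : ℕ) : ℝ := (ascPochhammer ℝ n).eval a

/-- The confluent hypergeometric limit function `₀F₁(;λ;z)`. -/
noncomputable def F01 (b z : ℝ) : ℝ := ∑' k : ℕ, z ^ k / (poch b k * k.factorial)

/-- The generalized Lauricella function `F_II`. -/
noncomputable def FII (lam₁ lam₂ z₁ z₂ z₃ z₄ : ℝ) : ℝ :=
  ∑' m : ℕ × ℕ × ℕ × ℕ,
    z₁ ^ m.1 * z₂ ^ m.2.1 * z₃ ^ m.2.2.1 * z₄ ^ m.2.2.2 /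
      (poch lam₁ (m.1 + m.2.1 + m.2.2.1) * poch lam₂ (2 * m.1 + m.2.1 + m.2.2.2) *
        m.1.factorial * m.2.1.factorial * m.2.2.1.factorial * m.2.2.2.factorial)

/-!
Expand `F_II` termwise. Writing `A = b̃₁₃x₁`, `B = b̃₂₃x₂`, `C = b̃₁₂₃x₁x₂`, `D = b̃₁₂x₁x₂`, the
`m`-th term is a monomial `K_m x₃ⁿ` with `n = 2m₁ + m₂ + m₄`, and its Laplace transform against
`x₃^(λ-1)/Γ(λ)` is `θ^(-λ) Γ(λ+n)/(Γ(λ) θⁿ) = θ^(-λ) (λ)ₙ/θⁿ`, which cancels the second Pochhammer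
symbol of `F_II`. All terms are nonnegative, so integration and summation commute. In the
resulting quadruple series the `m₄`-sum is `exp((A+B)/θ)`, and the trinomial theorem collapses
the `(m₁, m₂, m₃)`-sum to `₀F₁(;λ; AB/θ² + C/θ + D)`.
-/

open Nat Finset

section Pochhammer

variable {a : ℝ}

lemma poch_succ (n : ℕ) : poch a (n + 1) = poch a n * (a + n) := by
  simp [poch, ascPochhammer_succ_eval]

lemma poch_pos (ha : 0 < a) (n : ℕ) : 0 < poch a n :=
  ascPochhammer_pos n a ha

lemma min_one_pow_le_poch (ha : 0 < a) (n : ℕ) : min a 1 ^ n ≤ poch a n := by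
  induction n with
  | zero => simp [poch]
  | succ n ih =>
    rw [poch_succ, pow_succ]
    exact mul_le_mul ih ((min_le_left a 1).trans (le_add_of_nonneg_right n.cast_nonneg))
      (by positivity) (poch_pos ha n).le

lemma Gamma_add_nat_eq_mul_poch (ha : 0 < a) (n : ℕ) : Gamma (a + n) = Gamma a * poch a n := by
  induction n with
  | zero => simp [poch]
  | succ n ih =>
    rw [Nat.cast_succ, ← add_assoc, Gamma_add_one (by positivity), ih, poch_succ]
    ring

end Pochhammer

lemma hasSum_F01 {b z : ℝ} (hb : 0 < b) (hz : 0 ≤ z) :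
    HasSum (fun k : ℕ => z ^ k / (poch b k * k !)) (F01 b z) := by
  have hμ : 0 < min b 1 := lt_min hb one_pos
  refine Summable.hasSum <| (Real.summable_pow_div_factorial (z / min b 1)).of_nonneg_of_le
    (fun k => by have := poch_pos hb k; positivity) fun k => ?_
  rw [div_pow, div_div]
  gcongr
  exact min_one_pow_le_poch hb k

theorem HasSum.sigma_of_nonneg {β : Type*} {γ : β → Type*} {f : (Σ b, γ b) → ℝ} {g : β → ℝ}
    {a : ℝ} (hf : 0 ≤ f) (hfg : ∀ b, HasSum (fun c => f ⟨b, c⟩) (g b)) (hg : HasSum g a) :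
    HasSum f a := by
  refine hg.sigma_of_hasSum hfg ((summable_sigma_of_nonneg hf).2 ⟨fun b => (hfg b).summable, ?_⟩)
  simpa only [(hfg _).tsum_eq] using hg.summable

theorem HasSum.prod_of_nonneg {β γ : Type*} {f : β × γ → ℝ} {g : β → ℝ} {a : ℝ} (hf : 0 ≤ f)
    (hfg : ∀ b, HasSum (fun c => f (b, c)) (g b)) (hg : HasSum g a) : HasSum f a :=
  (Equiv.sigmaEquivProd β γ).hasSum_iff.1 <| .sigma_of_nonneg (fun _ => hf _) hfg hg

lemma sum_antidiagonal_pow_div_factorial {K : Type*} [Field K] [CharZero K] (x y : K) (n : ℕ) :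
    ∑ p ∈ antidiagonal n, x ^ p.1 * y ^ p.2 / (p.1 ! * p.2 !) = (x + y) ^ n / n ! := by
  rw [(Commute.all x y).add_pow', sum_div]
  refine sum_congr rfl fun p hp => ?_
  rw [HasAntidiagonal.mem_antidiagonal] at hp
  subst hp
  rw [nsmul_eq_mul, Nat.cast_choose K (le_add_right p.1 p.2), Nat.add_sub_cancel_left]
  field_simp
  rw [mul_div_mul_right _ _ (Nat.cast_ne_zero.2 (factorial_ne_zero _))]

lemma hasSum_binomial_of_nonneg {x y a : ℝ} {c : ℕ → ℝ} (hx : 0 ≤ x) (hy : 0 ≤ y) (hc : 0 ≤ c)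
    (h : HasSum (fun n => (x + y) ^ n / n ! * c n) a) :
    HasSum (fun p : ℕ × ℕ => x ^ p.1 * y ^ p.2 / (p.1 ! * p.2 !) * c (p.1 + p.2)) a := by
  rw [← HasAntidiagonal.sigmaAntidiagonalEquivProd.hasSum_iff]
  refine .sigma_of_nonneg (fun _ => mul_nonneg (by positivity) (hc _)) (fun n => ?_) h
  have hfiber : ∑ p ∈ antidiagonal n, x ^ p.1 * y ^ p.2 / (p.1 ! * p.2 !) * c (p.1 + p.2) =
      (x + y) ^ n / n ! * c n := by
    rw [← sum_antidiagonal_pow_div_factorial, sum_mul]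
    exact sum_congr rfl fun p hp => by rw [HasAntidiagonal.mem_antidiagonal.1 hp]
  exact hfiber ▸ (antidiagonal n).hasSum _

lemma hasSum_trinomial_of_nonneg {x y z a : ℝ} {c : ℕ → ℝ} (hx : 0 ≤ x) (hy : 0 ≤ y)
    (hz : 0 ≤ z) (hc : 0 ≤ c) (h : HasSum (fun n => (x + y + z) ^ n / n ! * c n) a) :
    HasSum (fun p : ℕ × ℕ × ℕ => x ^ p.1 * y ^ p.2.1 * z ^ p.2.2 /
      (p.1 ! * p.2.1 ! * p.2.2 !) * c (p.1 + p.2.1 + p.2.2)) a := by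
  have houter :=
    hasSum_binomial_of_nonneg hx (add_nonneg hy hz) hc (by simpa only [add_assoc] using h)
  refine .prod_of_nonneg (fun _ => mul_nonneg (by positivity) (hc _)) (fun i => ?_)
    (houter.prod_fiberwise fun i => (houter.summable.prod_factor i).hasSum)
  have hinner := hasSum_binomial_of_nonneg hy hz (c := fun j => x ^ i / i ! * c (i + j))
    (fun _ => mul_nonneg (by positivity) (hc _))
    ((houter.summable.prod_factor i).hasSum.congr_fun fun j => by ring)
  exact hinner.congr_fun fun q => by rw [← add_assoc]; ring

lemma hasSum_exp_mul_F01 {lam u v w r : ℝ} (hlam : 0 < lam) (hu : 0 ≤ u) (hv : 0 ≤ v) (hw : 0 ≤ w)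
    (hr : 0 ≤ r) :
    HasSum (fun m : ℕ × ℕ × ℕ × ℕ => u ^ m.1 * v ^ m.2.1 * w ^ m.2.2.1 * r ^ m.2.2.2 /
        (poch lam (m.1 + m.2.1 + m.2.2.1) * m.1 ! * m.2.1 ! * m.2.2.1 ! * m.2.2.2 !))
      (exp r * F01 lam (u + v + w)) := by
  have hpoch (n : ℕ) : 0 < poch lam n := poch_pos hlam n
  have htri := hasSum_trinomial_of_nonneg hu hv hw (c := fun n => (poch lam n)⁻¹)
    (fun n => (inv_pos.2 (hpoch n)).le)
    ((hasSum_F01 (z := u + v + w) hlam (by positivity)).congr_fun fun n => by ring)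
  have hexp : HasSum (fun n => r ^ n / n !) (exp r) := by
    rw [Real.exp_eq_exp_ℝ]
    exact NormedSpace.expSeries_div_hasSum_exp r
  let e : (ℕ × ℕ × ℕ) × ℕ ≃ ℕ × ℕ × ℕ × ℕ :=
    ⟨fun p => (p.1.1, p.1.2.1, p.1.2.2, p.2), fun m => ((m.1, m.2.1, m.2.2.1), m.2.2.2),
      fun _ => rfl, fun _ => rfl⟩
  rw [← e.hasSum_iff, mul_comm]
  refine .prod_of_nonneg (fun p => ?_) (fun p => (hexp.mul_left _).congr_fun fun n => ?_)
    (htri.mul_right (exp r))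
  · have := hpoch (p.1.1 + p.1.2.1 + p.1.2.2)
    dsimp [e]
    positivity
  · dsimp [e]
    ring

section Laplace

variable {lam θ : ℝ}

lemma exp_neg_mul_rpow_mul_pow_eq {x : ℝ} (hx : 0 < x) (K : ℝ) (n : ℕ) :
    exp (-(θ * x)) * ((Gamma lam)⁻¹ * x ^ (lam - 1) * (K * x ^ n)) =
      (Gamma lam)⁻¹ * K * (x ^ (lam + n - 1) * exp (-(θ * x))) := by
  rw [add_sub_right_comm, rpow_add hx, rpow_natCast]
  ring

lemma integrableOn_exp_neg_mul_rpow_mul_pow (hlam : 0 < lam) (hθ : 0 < θ) (K : ℝ) (n : ℕ) :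
    IntegrableOn (fun x => exp (-(θ * x)) * ((Gamma lam)⁻¹ * x ^ (lam - 1) * (K * x ^ n)))
      (Ioi 0) := by
  have h := (integrableOn_rpow_mul_exp_neg_mul_rpow (s := lam + n - 1)
    (by linarith [n.cast_nonneg (α := ℝ)]) one_pos hθ).const_mul ((Gamma lam)⁻¹ * K)
  refine IntegrableOn.congr_fun h (fun x hx => ?_) measurableSet_Ioi
  rw [exp_neg_mul_rpow_mul_pow_eq hx, rpow_one, neg_mul]

lemma integral_exp_neg_mul_rpow_mul_pow (hlam : 0 < lam) (hθ : 0 < θ) (K : ℝ) (n : ℕ) :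
    ∫ x in Ioi 0, exp (-(θ * x)) * ((Gamma lam)⁻¹ * x ^ (lam - 1) * (K * x ^ n)) =
      θ ^ (-lam) * (K * poch lam n / θ ^ n) := by
  rw [setIntegral_congr_fun measurableSet_Ioi fun x hx => exp_neg_mul_rpow_mul_pow_eq hx K n,
    integral_const_mul, integral_rpow_mul_exp_neg_mul_Ioi (by positivity) hθ,
    Gamma_add_nat_eq_mul_poch hlam, rpow_add (by positivity), rpow_natCast, one_div, inv_rpow hθ.le, ← rpow_neg hθ.le, inv_pow]
  field_simp [(Gamma_pos_of_pos hlam).ne']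

end Laplace

theorem setIntegral_exp_neg_mul_rpow_mul_FII {lam θ A B C D : ℝ} (hlam : 0 < lam) (hθ : 0 < θ)
    (hA : 0 ≤ A) (hB : 0 ≤ B) (hC : 0 ≤ C) (hD : 0 ≤ D) :
    ∫ x in Ioi 0, exp (-(θ * x)) * ((Gamma lam)⁻¹ * x ^ (lam - 1) *
        FII lam lam (A * x * (B * x)) (C * x) D (A * x + B * x)) =
      θ ^ (-lam) * exp ((A + B) / θ) * F01 lam (A * B / θ ^ 2 + C / θ + D) := by
  let n (m : ℕ × ℕ × ℕ × ℕ) : ℕ := 2 * m.1 + m.2.1 + m.2.2.2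
  let K (m : ℕ × ℕ × ℕ × ℕ) : ℝ := (A * B) ^ m.1 * C ^ m.2.1 * D ^ m.2.2.1 * (A + B) ^ m.2.2.2 /
    (poch lam (m.1 + m.2.1 + m.2.2.1) * poch lam (n m) * m.1 ! * m.2.1 ! * m.2.2.1 ! * m.2.2.2 !)
  let F (m : ℕ × ℕ × ℕ × ℕ) (x : ℝ) : ℝ :=
    exp (-(θ * x)) * ((Gamma lam)⁻¹ * x ^ (lam - 1) * (K m * x ^ n m))
  have hK (m) : 0 ≤ K m := by
    have := poch_pos hlam (m.1 + m.2.1 + m.2.2.1)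
    have := poch_pos hlam (n m)
    positivity
  have hexpand (x : ℝ) : exp (-(θ * x)) * ((Gamma lam)⁻¹ * x ^ (lam - 1) *
      FII lam lam (A * x * (B * x)) (C * x) D (A * x + B * x)) = ∑' m, F m x := by
    rw [FII, ← tsum_mul_left, ← tsum_mul_left]
    refine tsum_congr fun m => ?_
    simp only [F, K, n]
    rw [show A * x + B * x = (A + B) * x by ring, mul_pow (A + B)]
    ring
  have hF_int (m) : IntegrableOn (F m) (Ioi 0) :=
    integrableOn_exp_neg_mul_rpow_mul_pow hlam hθ (K m) (n m)
  have hF_nonneg (m) : ∀ x ∈ Ioi (0 : ℝ), 0 ≤ F m x := fun x (hx : 0 < x) => by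
    have := rpow_nonneg hx.le (lam - 1)
    have := hK m
    have := Gamma_pos_of_pos hlam
    simp only [F]
    positivity
  have hsum : HasSum (fun m => ∫ x in Ioi 0, F m x)
      (θ ^ (-lam) * (exp ((A + B) / θ) * F01 lam (A * B / θ ^ 2 + C / θ + D))) := by
    refine ((hasSum_exp_mul_F01 hlam (by positivity) (by positivity) hD (by positivity)).mul_left
      _).congr_fun fun m => ?_
    rw [integral_exp_neg_mul_rpow_mul_pow hlam hθ]
    simp only [K, n, div_pow]
    have := poch_pos hlam (m.1 + m.2.1 + m.2.2.1)
    have := poch_pos hlam (2 * m.1 + m.2.1 + m.2.2.2)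
    field_simp
    ring
  have hsum_norm : Summable fun m => ∫ x in Ioi 0, ‖F m x‖ := by
    refine hsum.summable.congr fun m => setIntegral_congr_fun measurableSet_Ioi fun x hx => ?_
    exact (norm_of_nonneg (hF_nonneg m x hx)).symm
  rw [integral_congr_ae (.of_forall hexpand),
    (hasSum_integral_of_summable_integral_norm hF_int hsum_norm).unique hsum, mul_assoc]

theorem laplace_of_FII (x₁ x₂ lam tb₁₂ tb₁₃ tb₂₃ tb₁₂₃ : ℝ)
    (hx₁ : 0 < x₁) (hx₂ : 0 < x₂) (hlam : 0 < lam)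
    (hb₁₂ : 0 ≤ tb₁₂) (hb₁₃ : 0 ≤ tb₁₃) (hb₂₃ : 0 ≤ tb₂₃) (hb₁₂₃ : 0 ≤ tb₁₂₃) :
    ∃ s₀ : ℝ, 0 < s₀ ∧ ∀ θ₃ : ℝ, s₀ < θ₃ →
      ∫ x₃ in Ioi (0:ℝ),
          Real.exp (-(θ₃ * x₃)) * ((Real.Gamma lam)⁻¹ * x₃ ^ (lam - 1) *
            FII lam lam (tb₁₃ * x₁ * x₃ * (tb₂₃ * x₂ * x₃)) (tb₁₂₃ * x₁ * x₂ * x₃)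
              (tb₁₂ * x₁ * x₂) (tb₁₃ * x₁ * x₃ + tb₂₃ * x₂ * x₃)) =
        θ₃ ^ (-lam) * Real.exp ((tb₁₃ * x₁ + tb₂₃ * x₂) / θ₃) *
          F01 lam ((tb₁₃ * tb₂₃ / θ₃ ^ 2 + tb₁₂₃ / θ₃ + tb₁₂) * x₁ * x₂) := by
  refine ⟨1, one_pos, fun θ hθ => ?_⟩
  rw [show (tb₁₃ * tb₂₃ / θ ^ 2 + tb₁₂₃ / θ + tb₁₂) * x₁ * x₂ =
      tb₁₃ * x₁ * (tb₂₃ * x₂) / θ ^ 2 + tb₁₂₃ * x₁ * x₂ / θ + tb₁₂ * x₁ * x₂ by ring]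
  exact setIntegral_exp_neg_mul_rpow_mul_FII hlam (one_pos.trans hθ) (by positivity)
    (by positivity) (by positivity) (by positivity)
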